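/- arXiv:1811.00115 — 4 statements merged into one kernel-verified Lean document; each statement's English description precedes it below -/
import Mathlib

section
/- Let n ≥ 1, r_U > 0, and U = B(0, r_U) the open ball in ℝⁿ centered at the origin. Let 𝒱 be a real number with vol_n(U) ≤ 𝒱 < ∞, and let r_𝒱 > 0 be such that vol_n(B(0, r_𝒱)) = 𝒱. Then the infimum of W₂(P_U, P_W) over all measurable sets W ⊆ ℝⁿ with 𝒱 ≤ vol_n(W) < ∞ equals the infimum of W₂(P_U, P_W) over all measurable W ⊆ ℝⁿ with vol_n(W) = 𝒱, and both equal W₂(P_U, P_{B(0, r_𝒱)}), the Wasserstein distance to the uniform measure on the concentric ball of volume 𝒱. -/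
open MeasureTheory Metric Set
open scoped ENNReal NNReal

noncomputable section

/-- The uniform probability measure on a set `S ⊆ ℝⁿ`: Lebesgue measure restricted to `S`
and normalized. -/
def unif {n : ℕ} (S : Set (EuclideanSpace ℝ (Fin n))) : Measure (EuclideanSpace ℝ (Fin n)) :=
  (volume S)⁻¹ • volume.restrict S

/-- The set of couplings of two measures `μ, ν` on `ℝⁿ`: measures on the product whose
marginals are `μ` and `ν`. -/
def couplings {n : ℕ} (μ ν : Measure (EuclideanSpace ℝ (Fin n))) :
    Set (Measure (EuclideanSpace ℝ (Fin n) × EuclideanSpace ℝ (Fin n))) :=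
  {γ | γ.map Prod.fst = μ ∧ γ.map Prod.snd = ν}

/-- The `L²`-Wasserstein distance between two measures on `ℝⁿ` (valued in `ℝ≥0∞`):
the infimum over all couplings `γ` of `(∫ ‖a − b‖² dγ(a, b))^{1/2}`. -/
def W2 {n : ℕ} (μ ν : Measure (EuclideanSpace ℝ (Fin n))) : ℝ≥0∞ :=
  ⨅ γ ∈ couplings μ ν, (∫⁻ w, edist w.1 w.2 ^ 2 ∂γ) ^ (1 / 2 : ℝ)

/-!
For a coupling `γ` of `μ` and `ν`, Minkowski's inequality in `L²(γ)` applied to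
`b = a - (a - b)` gives `W₂(μ, ν) ≥ ‖id‖_{L²(ν)} - ‖id‖_{L²(μ)}`. For concentric balls
`B(0, r_U) ⊆ B(0, r_𝒱)` the dilation `a ↦ (r_𝒱 / r_U) • a` is a coupling attaining this bound.
By the bathtub principle, among all sets of volume at least `vol B(0, r_𝒱)` the ball has the
smallest mean of `‖x‖²`, so no admissible `W` is closer to `P_U` than `B(0, r_𝒱)`.
-/

open scoped Pointwise

/-- Averaging step of the bathtub principle: `a / u ≤ c`, and passing from `u` to `v` adds mass
`v - u` whose integral is at least `c (v - u)`. -/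
lemma ENNReal.div_le_div_of_add_mul_le {a b u v c : ℝ≥0∞} (h : a + c * v ≤ b + c * u)
    (ha : a ≤ c * u) (huv : u ≤ v) (hv : v ≠ ⊤) (hc : c ≠ ⊤) : a / u ≤ b / v := by
  rcases eq_or_ne u 0 with rfl | hu
  · simp [nonpos_iff_eq_zero.1 (mul_zero c ▸ ha)]
  rcases eq_or_ne b ⊤ with rfl | hb
  · simp [ENNReal.top_div_of_ne_top hv]
  have hu' : u ≠ ⊤ := ne_top_of_le_ne_top hv huv
  have ha' : a ≠ ⊤ := ne_top_of_le_ne_top (by finiteness) ha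
  have hmul : v * a ≤ u * b := by
    rw [← ENNReal.toReal_le_toReal (by finiteness) (by finiteness)] at h ha huv ⊢
    rw [ENNReal.toReal_add ha' (by finiteness), ENNReal.toReal_add hb (by finiteness)] at h
    simp only [ENNReal.toReal_mul] at h ha ⊢
    nlinarith [mul_nonneg (sub_nonneg.2 huv) (sub_nonneg.2 ha), ENNReal.toReal_nonneg (a := u)]
  have hv0 : v ≠ 0 := (hu.bot_lt.trans_le huv).ne'
  refine ENNReal.div_le_of_le_mul ?_
  rwa [← ENNReal.mul_div_right_comm, ENNReal.le_div_iff_mul_le (.inl hv0) (.inl hv), mul_comm,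
    mul_comm b]

section Bathtub

variable {α : Type*} [MeasurableSpace α] {μ : Measure α} {f : α → ℝ≥0∞} {s t : Set α}
  {c : ℝ≥0∞}

lemma setLIntegral_add_mul_le (hs : MeasurableSet s) (ht : MeasurableSet t)
    (hf_in : ∀ x ∈ s, f x ≤ c) (hf_out : ∀ x ∉ s, c ≤ f x) :
    ∫⁻ x in s, f x ∂μ + c * μ t ≤ ∫⁻ x in t, f x ∂μ + c * μ s := by
  have hst : ∫⁻ x in s \ t, f x ∂μ ≤ c * μ (s \ t) := by
    rw [← setLIntegral_const]
    exact setLIntegral_mono' (hs.diff ht) fun x hx => hf_in x hx.1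
  have hts : c * μ (t \ s) ≤ ∫⁻ x in t \ s, f x ∂μ := by
    rw [← setLIntegral_const]
    exact setLIntegral_mono' (ht.diff hs) fun x hx => hf_out x hx.2
  rw [← lintegral_inter_add_sdiff f s ht, ← lintegral_inter_add_sdiff f t hs,
    ← measure_inter_add_sdiff t hs, ← measure_inter_add_sdiff s ht, inter_comm t s]
  calc _ = ∫⁻ x in s ∩ t, f x ∂μ + c * μ (s ∩ t) + (∫⁻ x in s \ t, f x ∂μ + c * μ (t \ s)) := by
        ring
    _ ≤ ∫⁻ x in s ∩ t, f x ∂μ + c * μ (s ∩ t) + (c * μ (s \ t) + ∫⁻ x in t \ s, f x ∂μ) := by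
        gcongr
    _ = _ := by ring

theorem setLAverage_le_setLAverage_of_le_of_ge (hs : MeasurableSet s) (ht : MeasurableSet t)
    (hc : c ≠ ⊤) (hf_in : ∀ x ∈ s, f x ≤ c) (hf_out : ∀ x ∉ s, c ≤ f x) (hst : μ s ≤ μ t)
    (ht_top : μ t ≠ ⊤) : ⨍⁻ x in s, f x ∂μ ≤ ⨍⁻ x in t, f x ∂μ := by
  rw [setLAverage_eq, setLAverage_eq]
  refine ENNReal.div_le_div_of_add_mul_le (setLIntegral_add_mul_le hs ht hf_in hf_out) ?_ hst
    ht_top hc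
  rw [← setLIntegral_const]
  exact setLIntegral_mono' hs hf_in

end Bathtub

theorem le_of_addHaar_ball_le {F : Type*} [NormedAddCommGroup F] [NormedSpace ℝ F]
    [MeasurableSpace F] [BorelSpace F] [FiniteDimensional ℝ F] [Nontrivial F] (μ : Measure F)
    [μ.IsAddHaarMeasure] {x y : F} {r s : ℝ} (hr : 0 ≤ r) (hs : 0 ≤ s)
    (h : μ (ball x r) ≤ μ (ball y s)) : r ≤ s := by
  rw [Measure.addHaar_ball μ x hr, Measure.addHaar_ball μ y hs,
    ENNReal.mul_le_mul_iff_left (measure_ball_pos μ 0 one_pos).ne' measure_ball_lt_top.ne,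
    ENNReal.ofReal_le_ofReal_iff (by positivity)] at h
  exact (pow_le_pow_iff_left₀ hr hs Module.finrank_pos.ne').1 h

lemma eLpNorm_id_map_smul {F : Type*} [NormedAddCommGroup F] [NormedSpace ℝ F]
    [MeasurableSpace F] [BorelSpace F] [SecondCountableTopology F] (μ : Measure F) (c : ℝ)
    (p : ℝ≥0∞) :
    eLpNorm id p (μ.map (c • ·)) = ‖c‖ₑ * eLpNorm id p μ := by
  rw [eLpNorm_map_measure aestronglyMeasurable_id (measurable_const_smul c).aemeasurable]
  exact eLpNorm_const_smul c id p μ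

lemma enorm_one_sub_add_one {c : ℝ} (hc : 1 ≤ c) : ‖1 - c‖ₑ + 1 = ‖c‖ₑ := by
  rw [Real.enorm_eq_ofReal_abs, Real.enorm_eq_ofReal_abs, abs_sub_comm,
    abs_of_nonneg (sub_nonneg.2 hc), abs_of_nonneg (zero_le_one.trans hc), ← ENNReal.ofReal_one,
    ← ENNReal.ofReal_add (sub_nonneg.2 hc) zero_le_one, sub_add_cancel]

section Wasserstein

variable {n : ℕ}

local notation "E" => EuclideanSpace ℝ (Fin n)

lemma transportCost_eq_eLpNorm (γ : Measure (E × E)) :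
    (∫⁻ w, edist w.1 w.2 ^ 2 ∂γ) ^ (1 / 2 : ℝ) = eLpNorm (fun w : E × E => w.1 - w.2) 2 γ := by
  rw [eLpNorm_eq_lintegral_rpow_enorm_toReal two_ne_zero ENNReal.ofNat_ne_top]
  simp [edist_eq_enorm_sub]

lemma W2_eq_iInf_eLpNorm (μ ν : Measure E) :
    W2 μ ν = ⨅ γ ∈ couplings μ ν, eLpNorm (fun w : E × E => w.1 - w.2) 2 γ := by
  simp only [W2, transportCost_eq_eLpNorm]

lemma eLpNorm_id_sub_le_W2 (μ ν : Measure E) : eLpNorm id 2 ν - eLpNorm id 2 μ ≤ W2 μ ν := by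
  rw [W2_eq_iInf_eLpNorm]
  refine le_iInf₂ fun γ ⟨hfst, hsnd⟩ => tsub_le_iff_left.2 ?_
  rw [← hfst, ← hsnd, eLpNorm_map_measure aestronglyMeasurable_id measurable_snd.aemeasurable,
    eLpNorm_map_measure aestronglyMeasurable_id measurable_fst.aemeasurable]
  have hsnd_eq : (id ∘ Prod.snd : E × E → E) = Prod.fst - fun w => w.1 - w.2 := by
    ext w : 1; simp
  rw [hsnd_eq]
  exact eLpNorm_sub_le measurable_fst.aestronglyMeasurable
    (measurable_fst.sub measurable_snd).aestronglyMeasurable one_le_two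

lemma W2_map_smul_le (μ : Measure E) (c : ℝ) :
    W2 μ (μ.map (c • ·)) ≤ ‖1 - c‖ₑ * eLpNorm id 2 μ := by
  have hg : Measurable fun a : E => (a, c • a) := measurable_id.prodMk (measurable_const_smul c)
  have hγ : μ.map (fun a => (a, c • a)) ∈ couplings μ (μ.map (c • ·)) := by
    refine ⟨?_, ?_⟩ <;> rw [Measure.map_map (by fun_prop) hg]
    · exact Measure.map_id
    · rfl
  refine (iInf₂_le _ hγ).trans_eq ?_
  rw [transportCost_eq_eLpNorm, eLpNorm_map_measure (by fun_prop) hg.aemeasurable,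
    ← eLpNorm_const_smul]
  congr 1
  ext a : 1
  simp [sub_smul]

theorem W2_map_smul_eq {μ : Measure E} (hμ : eLpNorm id 2 μ ≠ ⊤) {c : ℝ} (hc : 1 ≤ c) :
    W2 μ (μ.map (c • ·)) = eLpNorm id 2 (μ.map (c • ·)) - eLpNorm id 2 μ := by
  refine le_antisymm ((W2_map_smul_le μ c).trans ?_) (eLpNorm_id_sub_le_W2 _ _)
  refine ENNReal.le_sub_of_add_le_right hμ ?_
  rw [eLpNorm_id_map_smul, ← enorm_one_sub_add_one hc, add_mul, one_mul]

end Wasserstein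

section Uniform

variable {n : ℕ}

local notation "E" => EuclideanSpace ℝ (Fin n)

lemma map_smul_unif {c : ℝ} (hc : c ≠ 0) (S : Set E) : (unif S).map (c • ·) = unif (c • S) := by
  have hrestrict : (volume.restrict S).map (c • ·) =
      ENNReal.ofReal |(c ^ Module.finrank ℝ E)⁻¹| • volume.restrict (c • S) := by
    have h := (MeasurableEquiv.smul₀ c hc).restrict_map (volume : Measure E) (c • S)
    rw [show (MeasurableEquiv.smul₀ c hc : E ≃ᵐ E) ⁻¹' (c • S) = S by
      simp [preimage_smul₀ hc, inv_smul_smul₀ hc]] at h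
    rw [← Measure.restrict_smul, ← Measure.map_addHaar_smul volume hc]
    exact h.symm
  have hdet : ENNReal.ofReal |c ^ Module.finrank ℝ E| ≠ 0 :=
    (ENNReal.ofReal_pos.2 (by positivity)).ne'
  rw [unif, unif, Measure.map_smul, hrestrict, smul_smul, Measure.addHaar_smul, abs_inv,
    ENNReal.ofReal_inv_of_pos (by positivity),
    ENNReal.mul_inv (.inl hdet) (.inl ENNReal.ofReal_ne_top), mul_comm]

lemma eLpNorm_id_unif {p : ℝ≥0∞} (hp0 : p ≠ 0) (hp : p ≠ ⊤) (S : Set E) :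
    eLpNorm id p (unif S) = (⨍⁻ x in S, ‖x‖ₑ ^ p.toReal ∂volume) ^ (1 / p.toReal) := by
  rw [eLpNorm_eq_lintegral_rpow_enorm_toReal hp0 hp, setLAverage_eq']
  rfl

lemma eLpNorm_id_unif_lt_top {S : Set E} (hS : MeasurableSet S) (hb : Bornology.IsBounded S)
    (p : ℝ≥0∞) : eLpNorm id p (unif S) < ⊤ := by
  obtain ⟨r, hr⟩ := hb.subset_closedBall 0
  have hbound : ∀ᵐ x ∂unif S, ‖id x‖ ≤ r := Measure.ae_smul_measure
    (ae_restrict_of_forall_mem hS fun x hx => mem_closedBall_zero_iff.1 (hr hx)) _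
  refine (eLpNorm_le_of_ae_bound hbound).trans_lt (ENNReal.mul_lt_top ?_ ENNReal.ofReal_lt_top)
  refine ENNReal.rpow_lt_top_of_nonneg (by positivity) (ne_top_of_le_ne_top ENNReal.one_ne_top ?_)
  simp [unif, ENNReal.inv_mul_le_one]

lemma eLpNorm_id_unif_ball_le {p : ℝ≥0∞} (hp0 : p ≠ 0) (hp : p ≠ ⊤) {R : ℝ} {W : Set E}
    (hW : MeasurableSet W) (hle : volume (ball (0 : E) R) ≤ volume W) (hW_top : volume W ≠ ⊤) :
    eLpNorm id p (unif (ball (0 : E) R)) ≤ eLpNorm id p (unif W) := by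
  rw [eLpNorm_id_unif hp0 hp, eLpNorm_id_unif hp0 hp]
  have hp' : 0 < p.toReal := ENNReal.toReal_pos hp0 hp
  gcongr
  refine setLAverage_le_setLAverage_of_le_of_ge (c := ENNReal.ofReal R ^ p.toReal)
    measurableSet_ball hW (by simp [hp'.le]) (fun x hx => ?_) (fun x hx => ?_) hle hW_top
  · rw [← ofReal_norm]
    exact ENNReal.rpow_le_rpow (ENNReal.ofReal_le_ofReal (mem_ball_zero_iff.1 hx).le) hp'.le
  · rw [mem_ball_zero_iff, not_lt] at hx
    rw [← ofReal_norm]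
    exact ENNReal.rpow_le_rpow (ENNReal.ofReal_le_ofReal hx) hp'.le

theorem W2_unif_ball_le_of_volume_le {r R : ℝ} (hr : 0 < r) (hrR : r ≤ R) {W : Set E}
    (hW : MeasurableSet W) (hle : volume (ball (0 : E) R) ≤ volume W) (hW_top : volume W ≠ ⊤) :
    W2 (unif (ball (0 : E) r)) (unif (ball (0 : E) R)) ≤ W2 (unif (ball (0 : E) r)) (unif W) := by
  have hc : 0 < R / r := div_pos (hr.trans_le hrR) hr
  have hdilate : (unif (ball (0 : E) r)).map ((R / r) • ·) = unif (ball (0 : E) R) := by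
    rw [map_smul_unif hc.ne', _root_.smul_ball hc.ne', smul_zero, Real.norm_of_nonneg hc.le,
      div_mul_cancel₀ _ hr.ne']
  rw [← hdilate, W2_map_smul_eq (eLpNorm_id_unif_lt_top measurableSet_ball isBounded_ball 2).ne
    ((one_le_div hr).2 hrR), hdilate]
  exact (tsub_le_tsub_right (eLpNorm_id_unif_ball_le two_ne_zero ENNReal.ofNat_ne_top hW hle
    hW_top) _).trans (eLpNorm_id_sub_le_W2 _ _)

end Uniform

/-- **A concentric ball minimizes the Wasserstein distance to a ball among all sets of
at least (or exactly) a given volume.** Let `U = B(0, r_U)`, `vol(U) ≤ 𝒱 < ∞`, and let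
`r_𝒱 > 0` satisfy `vol(B(0, r_𝒱)) = 𝒱`. Then the infimum of `W₂(P_U, P_W)` over
measurable `W` with `𝒱 ≤ vol(W) < ∞` equals the infimum over measurable `W` with
`vol(W) = 𝒱`, and both equal `W₂(P_U, P_{B(0, r_𝒱)})`. -/
theorem inf_W2_over_sets_of_volume (n : ℕ) (hn : 1 ≤ n) (rU : ℝ) (hrU : 0 < rU)
    (𝒱 : ℝ) (h𝒱 : (volume (ball (0 : EuclideanSpace ℝ (Fin n)) rU)).toReal ≤ 𝒱)
    (rV : ℝ) (hrV : 0 < rV)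
    (hrV𝒱 : volume (ball (0 : EuclideanSpace ℝ (Fin n)) rV) = ENNReal.ofReal 𝒱) :
    (⨅ W ∈ {W : Set (EuclideanSpace ℝ (Fin n)) |
        MeasurableSet W ∧ ENNReal.ofReal 𝒱 ≤ volume W ∧ volume W ≠ ⊤},
      W2 (unif (ball (0 : EuclideanSpace ℝ (Fin n)) rU)) (unif W)) =
      W2 (unif (ball (0 : EuclideanSpace ℝ (Fin n)) rU))
        (unif (ball (0 : EuclideanSpace ℝ (Fin n)) rV)) ∧
    (⨅ W ∈ {W : Set (EuclideanSpace ℝ (Fin n)) |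
        MeasurableSet W ∧ volume W = ENNReal.ofReal 𝒱},
      W2 (unif (ball (0 : EuclideanSpace ℝ (Fin n)) rU)) (unif W)) =
      W2 (unif (ball (0 : EuclideanSpace ℝ (Fin n)) rU))
        (unif (ball (0 : EuclideanSpace ℝ (Fin n)) rV)) := by
  have : Nontrivial (EuclideanSpace ℝ (Fin n)) :=
    Module.nontrivial_of_finrank_pos (R := ℝ) (by simpa)
  have hrUV : rU ≤ rV := le_of_addHaar_ball_le volume hrU.le hrV.le <| by
    rw [hrV𝒱, ← ENNReal.ofReal_toReal measure_ball_lt_top.ne]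
    exact ENNReal.ofReal_le_ofReal h𝒱
  have hV_top : ENNReal.ofReal 𝒱 ≠ ⊤ := ENNReal.ofReal_ne_top
  constructor
  · refine le_antisymm (iInf₂_le _ ⟨measurableSet_ball, hrV𝒱.ge, hrV𝒱 ▸ hV_top⟩) ?_
    exact le_iInf₂ fun W ⟨hW, hle, hW_top⟩ =>
      W2_unif_ball_le_of_volume_le hrU hrUV hW (hrV𝒱 ▸ hle) hW_top
  · refine le_antisymm (iInf₂_le _ ⟨measurableSet_ball, hrV𝒱⟩) ?_
    exact le_iInf₂ fun W ⟨hW, hvol⟩ =>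
      W2_unif_ball_le_of_volume_le hrU hrUV hW (hrV𝒱.trans hvol.symm).le (hvol ▸ hV_top)

end
end

section
/- Let n ≥ 1, r_U > 0, U = B(0, r_U) the open ball in ℝⁿ centered at the origin, and let 𝒱 satisfy 0 < 𝒱 < vol_n(U). Then the infimum of W₂(P_U, P_W) over all measurable sets W ⊆ ℝⁿ with vol_n(W) = 𝒱 equals 0, and this infimum is not attained: W₂(P_U, P_W) > 0 for every measurable W ⊆ ℝⁿ with vol_n(W) = 𝒱. -/
/-!
Contracting every cell of the grid `s ℤⁿ` towards its centre by the ratio `l = (𝒱 / vol U)^{1/n}`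
maps `U` onto a set `W` of volume `𝒱`, pushes `P_U` forward to `P_W`, and moves no point farther
than the cell diameter `s √n`; letting `s → 0` shows that the infimum is `0`.
Conversely, if `W₂(μ, ν) = 0` then for every `ε` some coupling has cost `< ε³`, and by Markov's
inequality it moves mass at most `ε` by more than `ε`: the Lévy–Prokhorov distance vanishes and
`μ = ν`. But `P_U = P_W` forces `vol U = vol W`.
-/

open MeasureTheory Metric Set
open scoped ENNReal NNReal

noncomputable section

section GridContraction

variable {n : ℕ}

def gridIndex (s : ℝ) (x : EuclideanSpace ℝ (Fin n)) : Fin n → ℤ :=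
  fun i => ⌊x i / s⌋

def gridCell (s : ℝ) (k : Fin n → ℤ) : Set (EuclideanSpace ℝ (Fin n)) :=
  {x | gridIndex s x = k}

def gridCenter (s : ℝ) (k : Fin n → ℤ) : EuclideanSpace ℝ (Fin n) :=
  WithLp.toLp 2 fun i => s * (k i + 1 / 2)

def gridContraction (s l : ℝ) (x : EuclideanSpace ℝ (Fin n)) : EuclideanSpace ℝ (Fin n) :=
  AffineMap.homothety (gridCenter s (gridIndex s x)) l x

lemma measurable_gridIndex (s : ℝ) : Measurable (gridIndex (n := n) s) :=
  measurable_pi_lambda _ fun i => Measurable.floor (by fun_prop)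

lemma measurableSet_gridCell (s : ℝ) (k : Fin n → ℤ) : MeasurableSet (gridCell s k) :=
  measurable_gridIndex s (measurableSet_singleton k)

lemma mem_gridCell_gridIndex (s : ℝ) (x : EuclideanSpace ℝ (Fin n)) :
    x ∈ gridCell s (gridIndex s x) :=
  rfl

lemma pairwise_disjoint_gridCell (s : ℝ) :
    Pairwise (Function.onFun Disjoint (gridCell (n := n) s)) :=
  fun _ _ hkk' => disjoint_left.2 fun _ hx hx' => hkk' (hx.symm.trans hx')

lemma iUnion_gridCell (s : ℝ) : ⋃ k, gridCell (n := n) s k = univ :=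
  eq_univ_of_forall fun x => mem_iUnion.2 ⟨_, mem_gridCell_gridIndex s x⟩

lemma mem_gridCell_iff {s : ℝ} {k : Fin n → ℤ} {x : EuclideanSpace ℝ (Fin n)} :
    x ∈ gridCell s k ↔ ∀ i, x i / s ∈ Ico (k i : ℝ) (k i + 1) := by
  simp only [← Int.preimage_floor_singleton, mem_preimage, mem_singleton_iff]
  exact funext_iff

lemma convex_gridCell (s : ℝ) (k : Fin n → ℤ) : Convex ℝ (gridCell s k) := by
  intro x hx y hy a b ha hb hab
  rw [mem_gridCell_iff] at hx hy ⊢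
  intro i
  simpa [add_div, mul_div_assoc] using convex_Ico _ _ (hx i) (hy i) ha hb hab

lemma gridCenter_mem_gridCell {s : ℝ} (hs : s ≠ 0) (k : Fin n → ℤ) :
    gridCenter s k ∈ gridCell s k := by
  rw [mem_gridCell_iff]
  intro i
  simp only [gridCenter, PiLp.toLp_apply, mul_div_cancel_left₀ _ hs]
  constructor <;> linarith

lemma gridContraction_eq_homothety {s l : ℝ} {k : Fin n → ℤ} {x : EuclideanSpace ℝ (Fin n)}
    (hx : x ∈ gridCell s k) : gridContraction s l x = AffineMap.homothety (gridCenter s k) l x := by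
  rw [gridContraction, hx]

lemma homothety_mem_gridCell {s l : ℝ} (hs : s ≠ 0) (hl : l ∈ Icc 0 1) {k : Fin n → ℤ}
    {x : EuclideanSpace ℝ (Fin n)} (hx : x ∈ gridCell s k) :
    AffineMap.homothety (gridCenter s k) l x ∈ gridCell s k := by
  rw [AffineMap.homothety_eq_lineMap]
  exact (convex_gridCell s k).lineMap_mem (gridCenter_mem_gridCell hs k) hx hl

lemma dist_le_of_mem_gridCell {s : ℝ} (hs : 0 < s) {k : Fin n → ℤ}
    {x y : EuclideanSpace ℝ (Fin n)} (hx : x ∈ gridCell s k) (hy : y ∈ gridCell s k) :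
    dist x y ≤ s * √n := by
  have hcoord : ∀ i, dist (x i) (y i) ^ 2 ≤ s ^ 2 := fun i => by
    have h := Int.abs_sub_lt_one_of_floor_eq_floor (congrFun (hx.trans hy.symm) i)
    rw [← sub_div, abs_div, abs_of_pos hs, div_lt_one hs] at h
    rw [Real.dist_eq, sq_le_sq₀ (abs_nonneg _) hs.le]
    exact h.le
  calc dist x y = √(∑ i, dist (x i) (y i) ^ 2) := EuclideanSpace.dist_eq x y
    _ ≤ √(∑ _i : Fin n, s ^ 2) := Real.sqrt_le_sqrt (Finset.sum_le_sum fun i _ => hcoord i)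
    _ = s * √n := by
      rw [Finset.sum_const, Finset.card_univ, Fintype.card_fin, nsmul_eq_mul, mul_comm,
        Real.sqrt_mul (sq_nonneg s), Real.sqrt_sq hs.le]

lemma dist_gridContraction_le {s l : ℝ} (hs : 0 < s) (hl : l ∈ Icc 0 1)
    (x : EuclideanSpace ℝ (Fin n)) : dist x (gridContraction s l x) ≤ s * √n := by
  have hx := mem_gridCell_gridIndex s x
  rw [gridContraction_eq_homothety hx]
  exact dist_le_of_mem_gridCell hs hx (homothety_mem_gridCell hs.ne' hl hx)

lemma measurable_gridContraction (s l : ℝ) :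
    Measurable (gridContraction (n := n) s l) := by
  have hc : Measurable fun x : EuclideanSpace ℝ (Fin n) => gridCenter s (gridIndex s x) :=
    (Measurable.of_discrete (f := gridCenter s)).comp (measurable_gridIndex s)
  change Measurable fun x => l • (x - gridCenter s (gridIndex s x)) + gridCenter s (gridIndex s x)
  fun_prop

lemma measurableSet_image_homothety {c : EuclideanSpace ℝ (Fin n)} {l : ℝ} (hl : l ≠ 0)
    {A : Set (EuclideanSpace ℝ (Fin n))} (hA : MeasurableSet A) :
    MeasurableSet (AffineMap.homothety c l '' A) := by
  rw [image_eq_preimage_of_inverse (f := AffineMap.homothety c l) (g := AffineMap.homothety c l⁻¹)]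
  · exact (AffineMap.homothety_continuous c l⁻¹).measurable hA
  · intro x; rw [← AffineMap.homothety_mul_apply, inv_mul_cancel₀ hl, AffineMap.homothety_one]; rfl
  · intro x; rw [← AffineMap.homothety_mul_apply, mul_inv_cancel₀ hl, AffineMap.homothety_one]; rfl

lemma image_gridContraction (s l : ℝ) (A : Set (EuclideanSpace ℝ (Fin n))) :
    gridContraction s l '' A =
      ⋃ k, AffineMap.homothety (gridCenter s k) l '' (A ∩ gridCell s k) := by
  ext y
  simp only [mem_iUnion, mem_image, mem_inter_iff]
  constructor
  · rintro ⟨x, hxA, rfl⟩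
    exact ⟨gridIndex s x, x, ⟨hxA, mem_gridCell_gridIndex s x⟩, rfl⟩
  · rintro ⟨k, x, ⟨hxA, hxk⟩, rfl⟩
    exact ⟨x, hxA, gridContraction_eq_homothety hxk⟩

lemma measurableSet_image_gridContraction (s : ℝ) {l : ℝ} (hl : l ≠ 0)
    {A : Set (EuclideanSpace ℝ (Fin n))} (hA : MeasurableSet A) :
    MeasurableSet (gridContraction s l '' A) := by
  rw [image_gridContraction]
  exact .iUnion fun k => measurableSet_image_homothety hl (hA.inter (measurableSet_gridCell s k))

lemma volume_image_gridContraction {s l : ℝ} (hs : s ≠ 0) (hl : l ∈ Ioc 0 1)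
    {A : Set (EuclideanSpace ℝ (Fin n))} (hA : MeasurableSet A) :
    volume (gridContraction s l '' A) = ENNReal.ofReal (l ^ n) * volume A := by
  have hpieces : ∀ k, AffineMap.homothety (gridCenter s k) l '' (A ∩ gridCell s k) ⊆
      gridCell s k := by
    rintro k _ ⟨x, ⟨-, hxk⟩, rfl⟩
    exact homothety_mem_gridCell hs (Ioc_subset_Icc_self hl) hxk
  have hdisj : Pairwise (Function.onFun Disjoint fun k =>
      AffineMap.homothety (gridCenter s k) l '' (A ∩ gridCell s k)) :=
    fun k k' hkk' => (pairwise_disjoint_gridCell s hkk').mono (hpieces k) (hpieces k')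
  have hdisjA : Pairwise (Function.onFun Disjoint fun k => A ∩ gridCell s k) :=
    fun k k' hkk' => (pairwise_disjoint_gridCell s hkk').mono inter_subset_right inter_subset_right
  calc volume (gridContraction s l '' A)
      = ∑' k, volume (AffineMap.homothety (gridCenter s k) l '' (A ∩ gridCell s k)) := by
        rw [image_gridContraction, measure_iUnion hdisj fun k =>
          measurableSet_image_homothety hl.1.ne' (hA.inter (measurableSet_gridCell s k))]
    _ = ∑' k, ENNReal.ofReal (l ^ n) * volume (A ∩ gridCell s k) := by
        simp only [Measure.addHaar_image_homothety, finrank_euclideanSpace_fin,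
          abs_of_pos (pow_pos hl.1 n)]
    _ = ENNReal.ofReal (l ^ n) * volume A := by
        rw [ENNReal.tsum_mul_left, ← measure_iUnion hdisjA fun k =>
          hA.inter (measurableSet_gridCell s k), ← inter_iUnion, iUnion_gridCell, inter_univ]

end GridContraction

section Uniform

variable {n : ℕ}

lemma unif_apply (S : Set (EuclideanSpace ℝ (Fin n))) {A : Set (EuclideanSpace ℝ (Fin n))}
    (hA : MeasurableSet A) : unif S A = (volume S)⁻¹ * volume (A ∩ S) := by
  rw [unif, Measure.smul_apply, Measure.restrict_apply hA, smul_eq_mul]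

lemma isProbabilityMeasure_unif {S : Set (EuclideanSpace ℝ (Fin n))} (h0 : volume S ≠ 0)
    (htop : volume S ≠ ∞) : IsProbabilityMeasure (unif S) :=
  ⟨by rw [unif_apply S MeasurableSet.univ, univ_inter, ENNReal.inv_mul_cancel h0 htop]⟩

lemma volume_inter_eq_of_unif_eq {S T : Set (EuclideanSpace ℝ (Fin n))} (hS : MeasurableSet S)
    (hS0 : volume S ≠ 0) (hStop : volume S ≠ ∞) (hT0 : volume T ≠ 0) (hTtop : volume T ≠ ∞)
    (h : unif S = unif T) : volume (S ∩ T) = volume T := by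
  have hSS := congrArg (· S) h
  rwa [unif_apply S hS, unif_apply T hS, inter_self, ENNReal.inv_mul_cancel hS0 hStop,
    ← ENNReal.div_eq_inv_mul, eq_comm, ENNReal.div_eq_one_iff hT0 hTtop] at hSS

lemma volume_eq_of_unif_eq {S T : Set (EuclideanSpace ℝ (Fin n))} (hS : MeasurableSet S)
    (hT : MeasurableSet T) (hS0 : volume S ≠ 0) (hStop : volume S ≠ ∞) (hT0 : volume T ≠ 0)
    (hTtop : volume T ≠ ∞) (h : unif S = unif T) : volume S = volume T := by
  rw [← volume_inter_eq_of_unif_eq hT hT0 hTtop hS0 hStop h.symm, inter_comm,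
    volume_inter_eq_of_unif_eq hS hS0 hStop hT0 hTtop h]

lemma map_unif_eq_unif_image {T : EuclideanSpace ℝ (Fin n) → EuclideanSpace ℝ (Fin n)}
    (hT : Measurable T) {c : ℝ≥0∞} (hc0 : c ≠ 0) (hctop : c ≠ ∞)
    (hvol : ∀ A, MeasurableSet A → volume (T '' A) = c * volume A)
    {U : Set (EuclideanSpace ℝ (Fin n))} (hU : MeasurableSet U) :
    (unif U).map T = unif (T '' U) := by
  ext B hB
  rw [Measure.map_apply hT hB, unif_apply _ (hT hB), unif_apply _ hB, inter_comm B,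
    ← image_inter_preimage, inter_comm (T ⁻¹' B), hvol _ (hU.inter (hT hB)), hvol _ hU,
    ENNReal.mul_inv (.inl hc0) (.inl hctop), mul_mul_mul_comm, ENNReal.inv_mul_cancel hc0 hctop,
    one_mul]

end Uniform

section Wasserstein

variable {n : ℕ}

lemma W2_map_le {μ : Measure (EuclideanSpace ℝ (Fin n))} [IsProbabilityMeasure μ]
    {T : EuclideanSpace ℝ (Fin n) → EuclideanSpace ℝ (Fin n)} (hT : Measurable T) {C : ℝ}
    (hC : ∀ x, dist x (T x) ≤ C) : W2 μ (μ.map T) ≤ ENNReal.ofReal C := by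
  have hgraph : Measurable fun x => (x, T x) := measurable_id.prodMk hT
  have hcoupling : μ.map (fun x => (x, T x)) ∈ couplings μ (μ.map T) :=
    ⟨by rw [Measure.map_map measurable_fst hgraph]; exact Measure.map_id,
      by rw [Measure.map_map measurable_snd hgraph]; rfl⟩
  have hcost : ∫⁻ w, edist w.1 w.2 ^ 2 ∂(μ.map fun x => (x, T x)) ≤ ENNReal.ofReal C ^ 2 := by
    rw [lintegral_map ((measurable_fst.edist measurable_snd).pow_const 2) hgraph]
    calc ∫⁻ x, edist x (T x) ^ 2 ∂μ ≤ ∫⁻ _, ENNReal.ofReal C ^ 2 ∂μ :=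
          lintegral_mono fun x => by gcongr; rw [edist_dist]; exact ENNReal.ofReal_le_ofReal (hC x)
      _ = ENNReal.ofReal C ^ 2 := by simp
  calc W2 μ (μ.map T) ≤ (∫⁻ w, edist w.1 w.2 ^ 2 ∂(μ.map fun x => (x, T x))) ^ (1 / 2 : ℝ) :=
        iInf₂_le _ hcoupling
    _ ≤ (ENNReal.ofReal C ^ 2) ^ (1 / 2 : ℝ) := by gcongr
    _ = ENNReal.ofReal C := by
        rw [← ENNReal.rpow_natCast, ← ENNReal.rpow_mul]; norm_num

lemma measure_le_measure_thickening_add {μ ν : Measure (EuclideanSpace ℝ (Fin n))}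
    {γ : Measure (EuclideanSpace ℝ (Fin n) × EuclideanSpace ℝ (Fin n))} (hγ : γ ∈ couplings μ ν)
    {ε : ℝ≥0∞} (hε0 : ε ≠ 0) (hεtop : ε ≠ ∞) (hcost : ∫⁻ w, edist w.1 w.2 ^ 2 ∂γ < ε ^ 3)
    {B : Set (EuclideanSpace ℝ (Fin n))} (hB : MeasurableSet B) :
    μ B ≤ ν (thickening ε.toReal B) + ε := by
  set far := {w : EuclideanSpace ℝ (Fin n) × EuclideanSpace ℝ (Fin n) | ε ^ 2 ≤ edist w.1 w.2 ^ 2}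
  have hcover : Prod.fst ⁻¹' B ⊆ Prod.snd ⁻¹' thickening ε.toReal B ∪ far := by
    intro w hw
    by_cases hd : ε ≤ edist w.1 w.2
    · exact .inr (pow_le_pow_left' hd 2)
    · refine .inl ?_
      rw [mem_preimage, mem_thickening_iff_infEDist_lt, ENNReal.ofReal_toReal hεtop]
      rw [edist_comm] at hd
      exact (infEDist_le_edist_of_mem (x := w.2) hw).trans_lt (not_le.1 hd)
  have hfar : γ far ≤ ε := by
    have hmarkov : ε ^ 2 * γ far < ε ^ 2 * ε :=
      (mul_meas_ge_le_lintegral₀ ((measurable_fst.edist measurable_snd).pow_const 2).aemeasurable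
        (ε ^ 2)).trans_lt (by rwa [← pow_succ])
    exact ((ENNReal.mul_lt_mul_iff_right (pow_ne_zero 2 hε0) (ENNReal.pow_ne_top hεtop)).1
      hmarkov).le
  calc μ B = γ (Prod.fst ⁻¹' B) := by rw [← hγ.1, Measure.map_apply measurable_fst hB]
    _ ≤ γ (Prod.snd ⁻¹' thickening ε.toReal B) + γ far :=
        (measure_mono hcover).trans (measure_union_le _ _)
    _ ≤ ν (thickening ε.toReal B) + ε := by
        rw [← hγ.2, Measure.map_apply measurable_snd isOpen_thickening.measurableSet]
        gcongr

lemma levyProkhorovEDist_eq_zero_of_W2_eq_zero {μ ν : Measure (EuclideanSpace ℝ (Fin n))}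
    [IsProbabilityMeasure μ] [IsProbabilityMeasure ν] (h : W2 μ ν = 0) :
    levyProkhorovEDist μ ν = 0 := by
  refine nonpos_iff_eq_zero.1 (levyProkhorovEDist_le_of_forall_le μ ν 0 fun ε B hε hεtop hB => ?_)
  have hW2 : W2 μ ν < (ε ^ 3) ^ (1 / 2 : ℝ) :=
    h ▸ ENNReal.rpow_pos (ENNReal.pow_pos hε 3) (ENNReal.pow_ne_top hεtop.ne)
  simp only [W2, iInf_lt_iff] at hW2
  obtain ⟨γ, hγ, hcost⟩ := hW2
  exact measure_le_measure_thickening_add hγ hε.ne' hεtop.ne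
    ((ENNReal.rpow_lt_rpow_iff (by norm_num)).1 hcost) hB

lemma eq_of_W2_eq_zero {μ ν : Measure (EuclideanSpace ℝ (Fin n))}
    [IsProbabilityMeasure μ] [IsProbabilityMeasure ν] (h : W2 μ ν = 0) : μ = ν := by
  refine ext_of_generate_finite _ ?_ isPiSystem_isClosed (fun A hA => ?_) (by simp)
  · rw [BorelSpace.measurable_eq (α := EuclideanSpace ℝ (Fin n)), borel_eq_generateFrom_isClosed]
  · exact measure_eq_measure_of_levyProkhorovEDist_eq_zero_of_isClosed
      (levyProkhorovEDist_eq_zero_of_W2_eq_zero h) hA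
      ⟨1, one_pos, measure_ne_top _ _⟩ ⟨1, one_pos, measure_ne_top _ _⟩

end Wasserstein

lemma exists_volume_eq_W2_unif_le {n : ℕ} (hn : n ≠ 0) {U : Set (EuclideanSpace ℝ (Fin n))}
    (hU : MeasurableSet U) (hU0 : volume U ≠ 0) (hUtop : volume U ≠ ∞) {V : ℝ≥0∞} (hV0 : V ≠ 0)
    (hVU : V ≤ volume U) {ε : ℝ} (hε : 0 < ε) :
    ∃ W, MeasurableSet W ∧ volume W = V ∧ W2 (unif U) (unif W) ≤ ENNReal.ofReal ε := by
  have hratio_top : V / volume U ≠ ∞ := ENNReal.div_ne_top (ne_top_of_le_ne_top hUtop hVU) hU0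
  set r := (V / volume U).toReal
  have hr0 : 0 < r := ENNReal.toReal_pos (ENNReal.div_pos hV0 hUtop).ne' hratio_top
  have hr1 : r ≤ 1 := ENNReal.toReal_le_of_le_ofReal zero_le_one
    (by rwa [ENNReal.ofReal_one, ENNReal.div_le_iff hU0 hUtop, one_mul])
  set l := r ^ (n⁻¹ : ℝ)
  have hl : l ∈ Ioc 0 1 := ⟨Real.rpow_pos_of_pos hr0 _, Real.rpow_le_one hr0.le hr1 (by positivity)⟩
  have hln : ENNReal.ofReal (l ^ n) = V / volume U := by
    rw [Real.rpow_inv_natCast_pow hr0.le hn, ENNReal.ofReal_toReal hratio_top]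
  have hsqrt : 0 < √(n : ℝ) := Real.sqrt_pos.2 (by exact_mod_cast Nat.pos_of_ne_zero hn)
  set s := ε / √n
  have hs : 0 < s := div_pos hε hsqrt
  have hvol : ∀ A, MeasurableSet A →
      volume (gridContraction s l '' A) = ENNReal.ofReal (l ^ n) * volume A :=
    fun A hA => volume_image_gridContraction hs.ne' hl hA
  have := isProbabilityMeasure_unif hU0 hUtop
  refine ⟨gridContraction s l '' U, ?_, ?_, ?_⟩
  · exact measurableSet_image_gridContraction s hl.1.ne' hU
  · rw [hvol U hU, hln, ENNReal.div_mul_cancel hU0 hUtop]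
  · rw [← map_unif_eq_unif_image (measurable_gridContraction s l)
      (ENNReal.ofReal_pos.2 (pow_pos hl.1 n)).ne' ENNReal.ofReal_ne_top hvol hU]
    refine (W2_map_le (measurable_gridContraction s l)
      (dist_gridContraction_le hs (Ioc_subset_Icc_self hl))).trans_eq ?_
    rw [div_mul_cancel₀ ε hsqrt.ne']

theorem inf_W2_small_volume_not_attained_general (n : ℕ) (hn : 1 ≤ n) (rU : ℝ)
    (𝒱 : ℝ) (h𝒱pos : 0 < 𝒱)
    (h𝒱 : ENNReal.ofReal 𝒱 < volume (ball (0 : EuclideanSpace ℝ (Fin n)) rU)) :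
    (⨅ W ∈ {W : Set (EuclideanSpace ℝ (Fin n)) |
        MeasurableSet W ∧ volume W = ENNReal.ofReal 𝒱},
      W2 (unif (ball (0 : EuclideanSpace ℝ (Fin n)) rU)) (unif W)) = 0 ∧
    ∀ W : Set (EuclideanSpace ℝ (Fin n)), MeasurableSet W →
      volume W = ENNReal.ofReal 𝒱 →
        0 < W2 (unif (ball (0 : EuclideanSpace ℝ (Fin n)) rU)) (unif W) := by
  set U := ball (0 : EuclideanSpace ℝ (Fin n)) rU
  have hU0 : volume U ≠ 0 := (zero_le.trans_lt h𝒱).ne'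
  have hUtop : volume U ≠ ∞ := measure_ball_lt_top.ne
  have h𝒱0 : ENNReal.ofReal 𝒱 ≠ 0 := (ENNReal.ofReal_pos.2 h𝒱pos).ne'
  refine ⟨nonpos_iff_eq_zero.1 (ENNReal.le_of_forall_pos_le_add fun ε hε _ => ?_),
    fun W hW hWvol => ?_⟩
  · obtain ⟨W, hW, hWvol, hW2⟩ := exists_volume_eq_W2_unif_le (by omega) measurableSet_ball
      hU0 hUtop h𝒱0 h𝒱.le (NNReal.coe_pos.2 hε)
    exact (iInf₂_le W ⟨hW, hWvol⟩).trans (by simpa using hW2)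
  · have hW0 : volume W ≠ 0 := hWvol ▸ h𝒱0
    have hWtop : volume W ≠ ∞ := hWvol ▸ ENNReal.ofReal_ne_top
    have := isProbabilityMeasure_unif hU0 hUtop
    have := isProbabilityMeasure_unif hW0 hWtop
    refine pos_iff_ne_zero.2 fun hW2 => h𝒱.ne ?_
    rw [← hWvol]
    exact (volume_eq_of_unif_eq measurableSet_ball hW hU0 hUtop hW0 hWtop
      (eq_of_W2_eq_zero hW2)).symm

/-- **Below the volume of the ball the infimum is zero but not attained.**
Let `U = B(0, r_U)` and `0 < 𝒱 < vol(U)`. Then the infimum of `W₂(P_U, P_W)` over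
measurable `W ⊆ ℝⁿ` with `vol(W) = 𝒱` is `0`, yet `W₂(P_U, P_W) > 0` for every such `W`. -/
theorem inf_W2_small_volume_not_attained (n : ℕ) (hn : 1 ≤ n) (rU : ℝ) (hrU : 0 < rU)
    (𝒱 : ℝ) (h𝒱pos : 0 < 𝒱)
    (h𝒱 : ENNReal.ofReal 𝒱 < volume (ball (0 : EuclideanSpace ℝ (Fin n)) rU)) :
    (⨅ W ∈ {W : Set (EuclideanSpace ℝ (Fin n)) |
        MeasurableSet W ∧ volume W = ENNReal.ofReal 𝒱},
      W2 (unif (ball (0 : EuclideanSpace ℝ (Fin n)) rU)) (unif W)) = 0 ∧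
    ∀ W : Set (EuclideanSpace ℝ (Fin n)), MeasurableSet W →
      volume W = ENNReal.ofReal 𝒱 →
        0 < W2 (unif (ball (0 : EuclideanSpace ℝ (Fin n)) rU)) (unif W) :=
  inf_W2_small_volume_not_attained_general n hn rU 𝒱 h𝒱pos h𝒱

end
end

section
/- Let n > m ≥ 1, R > 0, and let f : ℝⁿ → ℝᵐ and Proj : ℝⁿ → ℝᵐ be two surjective linear maps, both restricted to the closed Euclidean ball B_R ⊆ ℝⁿ of radius R centered at the origin. Then for every τ ≥ 0 and ε > 0: vol_n({x ∈ B_R : vol_n({z ∈ B_R : dist(z, {w ∈ B_R : f(w) = f(x)}) < ε}) ≥ τ}) ≥ vol_n({x ∈ B_R : vol_n({z ∈ B_R : dist(z, {w ∈ B_R : Proj(w) = Proj(x)}) < ε}) ≥ τ}). In other words, the distribution (under uniform sampling of x in B_R) of the volume of the ε-neighborhood of the fiber through x is the same for all surjective linear maps from ℝⁿ to ℝᵐ. -/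
open MeasureTheory Metric Set
open scoped ENNReal NNReal

noncomputable section

/-- **Fiber volume distribution is the same for all surjective linear maps.**
Let `n > m ≥ 1`, `R > 0`, and let `f, Proj : ℝⁿ → ℝᵐ` be surjective linear maps, viewed
on the closed ball `B_R`. For every `τ` and `ε > 0`, the volume of the set of points
`x ∈ B_R` whose `f`-fiber (within `B_R`) has `ε`-neighborhood of volume at least `τ` is
at least the corresponding volume for `Proj`. -/
theorem fiber_volume_surjective_linear (n m : ℕ) (hm : 1 ≤ m) (hnm : m < n)
    (R : ℝ) (hR : 0 < R)
    (f Proj : EuclideanSpace ℝ (Fin n) →ₗ[ℝ] EuclideanSpace ℝ (Fin m))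
    (hf : Function.Surjective f) (hProj : Function.Surjective Proj)
    (τ : ℝ≥0∞) (ε : ℝ) (hε : 0 < ε) :
    volume {x ∈ closedBall (0 : EuclideanSpace ℝ (Fin n)) R |
        τ ≤ volume {z ∈ closedBall (0 : EuclideanSpace ℝ (Fin n)) R |
          Metric.infDist z
            {w ∈ closedBall (0 : EuclideanSpace ℝ (Fin n)) R | Proj w = Proj x} < ε}} ≤
      volume {x ∈ closedBall (0 : EuclideanSpace ℝ (Fin n)) R |
        τ ≤ volume {z ∈ closedBall (0 : EuclideanSpace ℝ (Fin n)) R |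
          Metric.infDist z
            {w ∈ closedBall (0 : EuclideanSpace ℝ (Fin n)) R | f w = f x} < ε}} := by
  classical
  set B : Set (EuclideanSpace ℝ (Fin n)) := closedBall 0 R with hB
  have hdim : Module.finrank ℝ (LinearMap.ker Proj) = Module.finrank ℝ (LinearMap.ker f) := by
    have h1 := LinearMap.finrank_range_add_finrank_ker f
    have h2 := LinearMap.finrank_range_add_finrank_ker Proj
    rw [LinearMap.range_eq_top.mpr hf] at h1
    rw [LinearMap.range_eq_top.mpr hProj] at h2
    simp [finrank_euclideanSpace_fin] at h1 h2
    omega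
  let e : (LinearMap.ker Proj) ≃ₗᵢ[ℝ] (LinearMap.ker f) :=
    ((stdOrthonormalBasis ℝ (LinearMap.ker Proj)).repr.trans
      (LinearIsometryEquiv.piLpCongrLeft 2 ℝ ℝ (finCongr (by rw [hdim])))).trans
      (stdOrthonormalBasis ℝ (LinearMap.ker f)).repr.symm
  let L : (LinearMap.ker Proj) →ₗᵢ[ℝ] EuclideanSpace ℝ (Fin n) :=
    (LinearMap.ker f).subtypeₗᵢ.comp e.toLinearIsometry
  let U0 : EuclideanSpace ℝ (Fin n) →ₗᵢ[ℝ] EuclideanSpace ℝ (Fin n) := L.extend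
  have hUsurj : Function.Surjective U0 := LinearMap.surjective_of_injective U0.injective
  let U : EuclideanSpace ℝ (Fin n) ≃ₗᵢ[ℝ] EuclideanSpace ℝ (Fin n) :=
    LinearIsometryEquiv.ofSurjective U0 hUsurj
  have hUapp : ∀ v, U v = U0 v := fun v => rfl
  -- U maps ker Proj onto ker f
  have hle : Submodule.map (U.toLinearEquiv : EuclideanSpace ℝ (Fin n) →ₗ[ℝ] _)
      (LinearMap.ker Proj) ≤ LinearMap.ker f := by
    rintro _ ⟨v, hv, rfl⟩
    have : U v = ((e ⟨v, hv⟩ : LinearMap.ker f) : EuclideanSpace ℝ (Fin n)) := by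
      rw [hUapp]
      exact L.extend_apply ⟨v, hv⟩
    show U v ∈ LinearMap.ker f
    rw [this]
    exact LinearMap.mem_ker.mpr (LinearMap.mem_ker.mp (e ⟨v, hv⟩).2)
  have hmap : Submodule.map (U.toLinearEquiv : EuclideanSpace ℝ (Fin n) →ₗ[ℝ] _)
      (LinearMap.ker Proj) = LinearMap.ker f := by
    refine Submodule.eq_of_le_of_finrank_eq hle ?_
    rw [LinearEquiv.finrank_map_eq U.toLinearEquiv, hdim]
  have hker : ∀ v, f (U v) = 0 ↔ Proj v = 0 := by
    intro v
    constructor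
    · intro h
      have hv : U v ∈ LinearMap.ker f := LinearMap.mem_ker.mpr h
      rw [← hmap] at hv
      obtain ⟨w, hw, hww⟩ := hv
      have : w = v := U.injective hww
      rw [← this]; exact LinearMap.mem_ker.mp hw
    · intro h
      exact LinearMap.mem_ker.mp (hmap ▸ ⟨v, LinearMap.mem_ker.mpr h, rfl⟩)
  have hfib : ∀ x w, f (U w) = f (U x) ↔ Proj w = Proj x := by
    intro x w
    have := hker (w - x)
    simpa [map_sub, sub_eq_zero] using this
  have hball : ∀ z, U z ∈ B ↔ z ∈ B := by
    intro z
    simp [hB, mem_closedBall_zero_iff]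
  -- image of fibers
  have himg : ∀ x, U '' {w ∈ B | Proj w = Proj x} = {w ∈ B | f w = f (U x)} := by
    intro x
    ext w'
    constructor
    · rintro ⟨w, ⟨hwB, hwP⟩, rfl⟩
      exact ⟨(hball w).2 hwB, (hfib x w).2 hwP⟩
    · rintro ⟨hwB, hwF⟩
      refine ⟨U.symm w', ⟨?_, ?_⟩, U.apply_symm_apply w'⟩
      · rw [← hball]; rwa [U.apply_symm_apply]
      · rw [← hfib x]; rwa [U.apply_symm_apply]
  -- preimage of the neighborhood set
  have hN : ∀ x, U ⁻¹' {z ∈ B | Metric.infDist z {w ∈ B | f w = f (U x)} < ε}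
      = {z ∈ B | Metric.infDist z {w ∈ B | Proj w = Proj x} < ε} := by
    intro x
    ext z
    simp only [mem_preimage, mem_sep_iff, hball]
    rw [← himg x, Metric.infDist_image U.isometry]
  have hmp : MeasurePreserving U := U.measurePreserving
  have hemb : MeasurableEmbedding (⇑U) := U.toHomeomorph.measurableEmbedding
  have hvol : ∀ x, volume {z ∈ B | Metric.infDist z {w ∈ B | Proj w = Proj x} < ε}
      = volume {z ∈ B | Metric.infDist z {w ∈ B | f w = f (U x)} < ε} := by
    intro x
    rw [← hN x]
    exact hmp.measure_preimage_emb hemb _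
  have hA : U ⁻¹' {x ∈ B | τ ≤ volume {z ∈ B | Metric.infDist z {w ∈ B | f w = f x} < ε}}
      = {x ∈ B | τ ≤ volume {z ∈ B | Metric.infDist z {w ∈ B | Proj w = Proj x} < ε}} := by
    ext x
    simp only [mem_preimage, mem_sep_iff, hball, hvol x]
  rw [← hA]
  exact le_of_eq (hmp.measure_preimage_emb hemb _)


end
end

section
/- (Reduction to optimal partial transport) Let n ≥ 1, r > 0, let B_r = B(0, r) be the open ball in ℝⁿ centered at the origin, and let 𝒱 be a real number with vol_n(B_r) ≤ 𝒱 < ∞. Let r^{#} > 0 be such that vol_n(B(0, r^{#})) = 𝒱. Then among all Borel probability measures μ on ℝⁿ satisfying μ(A) ≤ vol_n(A)/𝒱 for every Borel set A, the uniform measure P_{B(0, r^{#})} on the concentric ball B(0, r^{#}) minimizes W₂(μ, P_{B_r}), and it is the unique minimizer (up to almost-everywhere equality of densities). -/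
open MeasureTheory Metric Set
open scoped ENNReal NNReal

noncomputable section

/-!
Write `P = P_{B(0, r^#)}`. Since `vol B_r ≤ 𝒱`, we have `r ≤ r^#`, and `P_{B_r}` is the image
of `P` under the dilation `x ↦ l • x` with `l = r / r^# ≤ 1`. For every `δ > 0` and all `a, b`,
`(1 - δ)|a|² ≤ |a - b|² + (δ⁻¹ - 1)|b|²`; integrating against a coupling of `μ` and `P_{B_r}`
with `δ = l` bounds `W₂²(μ, P_{B_r})` from below by an increasing function of the second
moment of `μ`, and the dilation coupling shows that the bound is attained at `μ = P`. So
everything reduces to the bathtub principle: among measures with density at most `1/𝒱`, `P`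
is the unique minimizer of the second moment, because it spends all the allowed mass where
`|x|²` is smallest.
-/

open ProbabilityTheory

namespace ProbabilityTheory

variable {α β : Type*} [MeasurableSpace α] [MeasurableSpace β]

lemma cond_smul_measure (μ : Measure α) {c : ℝ≥0∞} (hc₀ : c ≠ 0) (hc : c ≠ ∞) (s : Set α) :
    (c • μ)[|s] = μ[|s] := by
  rw [cond, cond, Measure.smul_apply, smul_eq_mul, Measure.restrict_smul, smul_smul,
    ENNReal.mul_inv (Or.inl hc₀) (Or.inl hc), mul_right_comm, ENNReal.inv_mul_cancel hc₀ hc,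
    one_mul]

lemma map_cond_preimage (e : α ≃ᵐ β) (μ : Measure α) (t : Set β) :
    (μ[|e ⁻¹' t]).map e = (μ.map e)[|t] := by
  rw [cond, cond, Measure.map_smul, ← MeasurableEquiv.restrict_map, MeasurableEquiv.map_apply]

end ProbabilityTheory

section Bathtub

variable {α : Type*} [MeasurableSpace α] {μ P : Measure α} [IsProbabilityMeasure μ]
  [IsProbabilityMeasure P] {s : Set α} {g : α → ℝ≥0∞} {c : ℝ≥0∞}

/-- The second integral is the gain of `P` over `μ`: `P - μ|_s` is the mass that `μ` has moved
from `s`, where `g ≤ c`, to `sᶜ`, where `g ≥ c`. -/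
lemma lintegral_add_lintegral_tsub_le (hs : MeasurableSet s) (hPs : P sᶜ = 0)
    (hμP : μ.restrict s ≤ P) (hg : Measurable g) (hgs : ∀ a ∈ s, g a ≤ c)
    (hgsc : ∀ a ∉ s, c ≤ g a) :
    ∫⁻ a, g a ∂P + ∫⁻ a, (c - g a) ∂(P - μ.restrict s) ≤ ∫⁻ a, g a ∂μ := by
  set σ := P - μ.restrict s
  have hσP : σ + μ.restrict s = P := Measure.sub_add_cancel_of_le hμP
  have hσ_ae : ∀ᵐ a ∂σ, a ∈ s :=
    mem_ae_iff.2 (nonpos_iff_eq_zero.1 (hPs ▸ Measure.le_iff'.1 Measure.sub_le sᶜ))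
  have hσ_univ : σ univ = μ sᶜ := by
    rw [Measure.sub_apply MeasurableSet.univ hμP, measure_univ, Measure.restrict_apply_univ,
      prob_compl_eq_one_sub hs]
  have hσ_lintegral : ∫⁻ a, g a ∂σ + ∫⁻ a, (c - g a) ∂σ = c * μ sᶜ := by
    rw [← lintegral_add_left hg, ← hσ_univ, ← lintegral_const]
    exact lintegral_congr_ae (hσ_ae.mono fun a ha => add_tsub_cancel_of_le (hgs a ha))
  calc ∫⁻ a, g a ∂P + ∫⁻ a, (c - g a) ∂σ
      = c * μ sᶜ + ∫⁻ a in s, g a ∂μ := by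
        rw [← hσ_lintegral]
        nth_rw 1 [← hσP]
        rw [lintegral_add_measure]
        ring
    _ ≤ ∫⁻ a in sᶜ, g a ∂μ + ∫⁻ a in s, g a ∂μ := by
        rw [← setLIntegral_const]
        exact add_le_add (setLIntegral_mono hg fun a ha => hgsc a ha) le_rfl
    _ = ∫⁻ a, g a ∂μ := by rw [add_comm, lintegral_add_compl g hs]

theorem lintegral_le_lintegral_of_restrict_le (hs : MeasurableSet s) (hPs : P sᶜ = 0)
    (hμP : μ.restrict s ≤ P) (hg : Measurable g) (hgs : ∀ a ∈ s, g a ≤ c)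
    (hgsc : ∀ a ∉ s, c ≤ g a) :
    ∫⁻ a, g a ∂P ≤ ∫⁻ a, g a ∂μ :=
  le_self_add.trans (lintegral_add_lintegral_tsub_le hs hPs hμP hg hgs hgsc)

theorem eq_of_lintegral_le_of_restrict_le (hs : MeasurableSet s) (hPs : P sᶜ = 0)
    (hμP : μ.restrict s ≤ P) (hg : Measurable g) (hc : c ≠ ∞) (hgs : ∀ a ∈ s, g a < c)
    (hgsc : ∀ a ∉ s, c ≤ g a) (hle : ∫⁻ a, g a ∂μ ≤ ∫⁻ a, g a ∂P) :
    μ = P := by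
  set σ := P - μ.restrict s
  have hP_ae : ∀ᵐ a ∂P, a ∈ s := mem_ae_iff.2 hPs
  have hP_ne_top : ∫⁻ a, g a ∂P ≠ ∞ := by
    refine ne_top_of_le_ne_top hc ?_
    calc ∫⁻ a, g a ∂P ≤ ∫⁻ _, c ∂P :=
          lintegral_mono_ae (hP_ae.mono fun a ha => (hgs a ha).le)
      _ = c := by simp
  have hgain : ∫⁻ a, (c - g a) ∂σ = 0 := by
    have h := (lintegral_add_lintegral_tsub_le hs hPs hμP hg (fun a ha => (hgs a ha).le)
      hgsc).trans hle
    rw [← add_zero (∫⁻ a, g a ∂P), add_assoc, zero_add,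
      ENNReal.add_le_add_iff_left hP_ne_top] at h
    exact nonpos_iff_eq_zero.1 h
  have hσ_s : σ s = 0 := by
    have h := (lintegral_eq_zero_iff (measurable_const.sub hg)).1 hgain
    exact measure_mono_null (fun a ha => (tsub_pos_of_lt (hgs a ha)).ne') (ae_iff.1 h)
  have hσ : σ = 0 := by
    rw [← Measure.measure_univ_eq_zero, ← measure_add_measure_compl hs, hσ_s, zero_add]
    exact nonpos_iff_eq_zero.1 (hPs ▸ Measure.le_iff'.1 Measure.sub_le sᶜ)
  have hμs : μ.restrict s = P := by
    rw [← Measure.sub_add_cancel_of_le hμP]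
    change μ.restrict s = σ + μ.restrict s
    rw [hσ, zero_add]
  have hμ_s : μ s = 1 := by rw [← Measure.restrict_apply_univ, hμs, measure_univ]
  rw [← hμs, Measure.restrict_eq_self_of_ae_mem (mem_ae_iff.2 ((prob_compl_eq_zero_iff hs).2 hμ_s))]

end Bathtub

section SecondMoment

variable {E : Type*} [NormedAddCommGroup E]

def secondMoment [MeasurableSpace E] (μ : Measure E) : ℝ≥0∞ :=
  ∫⁻ a, ‖a‖ₑ ^ 2 ∂μ

lemma secondMoment_map_smul [MeasurableSpace E] [NormedSpace ℝ E] [BorelSpace E]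
    (μ : Measure E) (c : ℝ) :
    secondMoment (μ.map (c • ·)) = ‖c‖ₑ ^ 2 * secondMoment μ := by
  rw [secondMoment, secondMoment, lintegral_map (by fun_prop) (by fun_prop),
    ← lintegral_const_mul _ (by fun_prop)]
  simp_rw [enorm_smul, mul_pow]

lemma ofReal_one_sub_mul_enorm_sq_le (a b : E) {δ : ℝ} (hδ : 0 < δ) :
    ENNReal.ofReal (1 - δ) * ‖a‖ₑ ^ 2 ≤ edist a b ^ 2 + ENNReal.ofReal (δ⁻¹ - 1) * ‖b‖ₑ ^ 2 := by
  have hreal : (1 - δ) * ‖a‖ ^ 2 ≤ dist a b ^ 2 + (δ⁻¹ - 1) * ‖b‖ ^ 2 := by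
    have hab : |‖a‖ - ‖b‖| ≤ dist a b := by rw [dist_eq_norm]; exact abs_norm_sub_norm_le a b
    have hsq : (‖a‖ - ‖b‖) ^ 2 ≤ dist a b ^ 2 := by
      rw [← sq_abs]; exact pow_le_pow_left₀ (abs_nonneg _) hab 2
    -- the gap is `δ⁻¹ (δ‖a‖ - ‖b‖)²`
    nlinarith [mul_nonneg (inv_nonneg.2 hδ.le) (sq_nonneg (δ * ‖a‖ - ‖b‖)),
      mul_inv_cancel₀ hδ.ne']
  calc ENNReal.ofReal (1 - δ) * ‖a‖ₑ ^ 2 = ENNReal.ofReal ((1 - δ) * ‖a‖ ^ 2) := by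
        rw [ENNReal.ofReal_mul' (sq_nonneg _), ENNReal.ofReal_pow (norm_nonneg _), ofReal_norm]
    _ ≤ ENNReal.ofReal (dist a b ^ 2 + (δ⁻¹ - 1) * ‖b‖ ^ 2) := ENNReal.ofReal_le_ofReal hreal
    _ ≤ ENNReal.ofReal (dist a b ^ 2) + ENNReal.ofReal ((δ⁻¹ - 1) * ‖b‖ ^ 2) :=
        ENNReal.ofReal_add_le
    _ = edist a b ^ 2 + ENNReal.ofReal (δ⁻¹ - 1) * ‖b‖ₑ ^ 2 := by
        rw [ENNReal.ofReal_mul' (sq_nonneg _), ENNReal.ofReal_pow dist_nonneg,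
          ENNReal.ofReal_pow (norm_nonneg _), ofReal_norm, ← edist_dist]

lemma enorm_sq_lt_ofReal_sq_iff (a : E) (R : ℝ) :
    ‖a‖ₑ ^ 2 < ENNReal.ofReal R ^ 2 ↔ ‖a‖ < R := by
  rw [ENNReal.pow_lt_pow_left_iff two_ne_zero, ← ofReal_norm,
    ENNReal.ofReal_lt_ofReal_iff_of_nonneg (norm_nonneg a)]

end SecondMoment

section Transport

variable {n : ℕ}

local notation "ℝⁿ" => EuclideanSpace ℝ (Fin n)

def transportCost (μ ν : Measure ℝⁿ) : ℝ≥0∞ :=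
  ⨅ γ ∈ couplings μ ν, ∫⁻ w, edist w.1 w.2 ^ 2 ∂γ

lemma W2_eq_transportCost_rpow (μ ν : Measure ℝⁿ) :
    W2 μ ν = transportCost μ ν ^ (1 / 2 : ℝ) := by
  rw [W2, transportCost, iInf_subtype', iInf_subtype']
  exact ((ENNReal.orderIsoRpow (1 / 2) (by norm_num)).map_iInf
    fun γ : couplings μ ν => ∫⁻ w, edist w.1 w.2 ^ 2 ∂(γ : Measure (ℝⁿ × ℝⁿ))).symm

variable {μ ν : Measure (EuclideanSpace ℝ (Fin n))}
  {γ : Measure (EuclideanSpace ℝ (Fin n) × EuclideanSpace ℝ (Fin n))}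

lemma lintegral_fst_of_mem_couplings (hγ : γ ∈ couplings μ ν) {f : ℝⁿ → ℝ≥0∞}
    (hf : Measurable f) : ∫⁻ w, f w.1 ∂γ = ∫⁻ a, f a ∂μ := by
  rw [← hγ.1, lintegral_map hf measurable_fst]

lemma lintegral_snd_of_mem_couplings (hγ : γ ∈ couplings μ ν) {f : ℝⁿ → ℝ≥0∞}
    (hf : Measurable f) : ∫⁻ w, f w.2 ∂γ = ∫⁻ b, f b ∂ν := by
  rw [← hγ.2, lintegral_map hf measurable_snd]

lemma map_prodMk_mem_couplings (μ : Measure ℝⁿ) {f : ℝⁿ → ℝⁿ} (hf : Measurable f) :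
    μ.map (fun a => (a, f a)) ∈ couplings μ (μ.map f) := by
  constructor
  · rw [Measure.map_map measurable_fst (measurable_id'.prodMk hf)]
    exact Measure.map_id
  · rw [Measure.map_map measurable_snd (measurable_id'.prodMk hf)]
    rfl

lemma transportCost_map_smul_le (μ : Measure ℝⁿ) (c : ℝ) :
    transportCost μ (μ.map (c • ·)) ≤ ‖1 - c‖ₑ ^ 2 * secondMoment μ := by
  calc transportCost μ (μ.map (c • ·))
      ≤ ∫⁻ w, edist w.1 w.2 ^ 2 ∂(μ.map fun a => (a, c • a)) :=
        iInf₂_le _ (map_prodMk_mem_couplings μ (measurable_const_smul c))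
    _ = ‖1 - c‖ₑ ^ 2 * secondMoment μ := by
        rw [lintegral_map (by fun_prop) (by fun_prop), secondMoment,
          ← lintegral_const_mul _ (by fun_prop)]
        refine lintegral_congr fun a => ?_
        rw [edist_eq_enorm_sub, show a - c • a = (1 - c) • a by rw [sub_smul, one_smul],
          enorm_smul, mul_pow]

lemma ofReal_one_sub_mul_secondMoment_le (μ ν : Measure ℝⁿ) {δ : ℝ} (hδ : 0 < δ) :
    ENNReal.ofReal (1 - δ) * secondMoment μ ≤
      transportCost μ ν + ENNReal.ofReal (δ⁻¹ - 1) * secondMoment ν := by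
  rw [transportCost, ENNReal.iInf₂_add]
  refine le_iInf₂ fun γ hγ => ?_
  calc ENNReal.ofReal (1 - δ) * secondMoment μ
      = ∫⁻ w, ENNReal.ofReal (1 - δ) * ‖w.1‖ₑ ^ 2 ∂γ := by
        rw [lintegral_fst_of_mem_couplings hγ (f := fun a => ENNReal.ofReal (1 - δ) * ‖a‖ₑ ^ 2)
          (by fun_prop), lintegral_const_mul _ (by fun_prop), secondMoment]
    _ ≤ ∫⁻ w, (edist w.1 w.2 ^ 2 + ENNReal.ofReal (δ⁻¹ - 1) * ‖w.2‖ₑ ^ 2) ∂γ :=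
        lintegral_mono fun w => ofReal_one_sub_mul_enorm_sq_le w.1 w.2 hδ
    _ = ∫⁻ w, edist w.1 w.2 ^ 2 ∂γ + ENNReal.ofReal (δ⁻¹ - 1) * secondMoment ν := by
        rw [lintegral_add_left (by fun_prop),
          lintegral_snd_of_mem_couplings hγ (f := fun b => ENNReal.ofReal (δ⁻¹ - 1) * ‖b‖ₑ ^ 2)
          (by fun_prop), lintegral_const_mul _ (by fun_prop), secondMoment]

lemma secondMoment_le_of_transportCost_eq_zero (h : transportCost μ ν = 0) :
    secondMoment μ ≤ secondMoment ν := by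
  refine ENNReal.le_of_forall_lt_one_mul_le fun a ha => ?_
  rcases eq_or_ne a 0 with rfl | ha₀
  · simp
  set δ := a.toReal
  have hδ₀ : 0 < δ := ENNReal.toReal_pos ha₀ ha.ne_top
  have hδ₁ : δ < 1 := by simpa using (ENNReal.toReal_lt_toReal ha.ne_top ENNReal.one_ne_top).2 ha
  have hb := ofReal_one_sub_mul_secondMoment_le μ ν hδ₀
  rw [h, zero_add] at hb
  rw [← ENNReal.mul_le_mul_iff_right (a := ENNReal.ofReal (1 - δ)) (by simpa using hδ₁)
    ENNReal.ofReal_ne_top]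
  calc ENNReal.ofReal (1 - δ) * (a * secondMoment μ)
      = a * (ENNReal.ofReal (1 - δ) * secondMoment μ) := by ring
    _ ≤ a * (ENNReal.ofReal (δ⁻¹ - 1) * secondMoment ν) := by gcongr
    _ = ENNReal.ofReal (1 - δ) * secondMoment ν := by
        rw [← ENNReal.ofReal_toReal ha.ne_top, ← mul_assoc,
          ← ENNReal.ofReal_mul ENNReal.toReal_nonneg, mul_sub, mul_inv_cancel₀ hδ₀.ne', mul_one]

section Dilation

variable {P : Measure (EuclideanSpace ℝ (Fin n))} {l : ℝ}

/-- The dilation coupling is the equality case of `ofReal_one_sub_mul_secondMoment_le` for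
`δ = l`. -/
lemma transportCost_map_smul_add_le (hl₀ : 0 < l) (hl₁ : l ≤ 1) :
    transportCost P (P.map (l • ·)) + ENNReal.ofReal (l⁻¹ - 1) * secondMoment (P.map (l • ·))
      ≤ ENNReal.ofReal (1 - l) * secondMoment P := by
  have hcoeff : ‖1 - l‖ₑ ^ 2 + ENNReal.ofReal (l⁻¹ - 1) * ‖l‖ₑ ^ 2 = ENNReal.ofReal (1 - l) := by
    have hl' : 0 ≤ l⁻¹ - 1 := sub_nonneg.2 (one_le_inv₀ hl₀ |>.2 hl₁)
    rw [Real.enorm_eq_ofReal (by linarith), Real.enorm_eq_ofReal hl₀.le,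
      ← ENNReal.ofReal_pow (by linarith), ← ENNReal.ofReal_pow hl₀.le,
      ← ENNReal.ofReal_mul hl', ← ENNReal.ofReal_add (by positivity) (by positivity)]
    congr 1
    field_simp
    ring
  rw [secondMoment_map_smul, ← hcoeff, add_mul, mul_assoc]
  gcongr
  exact transportCost_map_smul_le P l

theorem transportCost_map_smul_le_transportCost (hl₀ : 0 < l) (hl₁ : l ≤ 1)
    (hP : secondMoment P ≠ ∞) (hPμ : secondMoment P ≤ secondMoment μ) :
    transportCost P (P.map (l • ·)) ≤ transportCost μ (P.map (l • ·)) := by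
  have hK : ENNReal.ofReal (l⁻¹ - 1) * secondMoment (P.map (l • ·)) ≠ ∞ := by
    rw [secondMoment_map_smul]
    exact ENNReal.mul_ne_top ENNReal.ofReal_ne_top (ENNReal.mul_ne_top (by simp) hP)
  refine (ENNReal.add_le_add_iff_right hK).1 ?_
  calc _ ≤ ENNReal.ofReal (1 - l) * secondMoment P := transportCost_map_smul_add_le hl₀ hl₁
    _ ≤ ENNReal.ofReal (1 - l) * secondMoment μ := by gcongr
    _ ≤ _ := ofReal_one_sub_mul_secondMoment_le μ _ hl₀

theorem secondMoment_le_of_transportCost_le (hl₀ : 0 < l) (hl₁ : l ≤ 1)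
    (h : transportCost μ (P.map (l • ·)) ≤ transportCost P (P.map (l • ·))) :
    secondMoment μ ≤ secondMoment P := by
  rcases hl₁.lt_or_eq with hl₁ | rfl
  · rw [← ENNReal.mul_le_mul_iff_right (a := ENNReal.ofReal (1 - l)) (by simpa using hl₁)
      ENNReal.ofReal_ne_top]
    calc ENNReal.ofReal (1 - l) * secondMoment μ
        ≤ transportCost μ (P.map (l • ·))
            + ENNReal.ofReal (l⁻¹ - 1) * secondMoment (P.map (l • ·)) :=
          ofReal_one_sub_mul_secondMoment_le μ _ hl₀
      _ ≤ transportCost P (P.map (l • ·))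
            + ENNReal.ofReal (l⁻¹ - 1) * secondMoment (P.map (l • ·)) := by gcongr
      _ ≤ _ := transportCost_map_smul_add_le hl₀ hl₁.le
  · have h₀ : transportCost μ (P.map ((1 : ℝ) • ·)) = 0 :=
      nonpos_iff_eq_zero.1 (by simpa using h.trans (transportCost_map_smul_le P 1))
    simpa [secondMoment_map_smul] using secondMoment_le_of_transportCost_eq_zero h₀

end Dilation

section Ball

lemma unif_eq_cond (S : Set ℝⁿ) : unif S = volume[|S] := rfl

lemma isProbabilityMeasure_unif_ball {R : ℝ} (hR : 0 < R) :
    IsProbabilityMeasure (unif (ball (0 : ℝⁿ) R)) :=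
  cond_isProbabilityMeasure_of_finite (measure_ball_pos volume 0 hR).ne' measure_ball_lt_top.ne

lemma unif_compl_eq_zero {S : Set ℝⁿ} (hS : MeasurableSet S) : unif S Sᶜ = 0 := by
  rw [unif_eq_cond, cond_apply hS, inter_compl_self, measure_empty, mul_zero]

lemma restrict_le_unif {S : Set ℝⁿ} (hS : MeasurableSet S)
    (hμ : ∀ A, MeasurableSet A → μ A ≤ volume A / volume S) : μ.restrict S ≤ unif S := by
  refine Measure.le_iff.2 fun A hA => ?_
  rw [Measure.restrict_apply hA, unif_eq_cond, cond_apply hS, inter_comm S A, mul_comm,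
    ← div_eq_mul_inv]
  exact hμ _ (hA.inter hS)

lemma map_smul_unif_ball {r R : ℝ} (hr : 0 < r) (hR : 0 < R) :
    (unif (ball (0 : ℝⁿ) R)).map ((r / R) • ·) = unif (ball (0 : ℝⁿ) r) := by
  have hl : r / R ≠ 0 := (div_pos hr hR).ne'
  set e := MeasurableEquiv.smul₀ (α := ℝⁿ) (r / R) hl
  have hpre : e ⁻¹' ball 0 r = ball 0 R := by
    rw [MeasurableEquiv.coe_smul₀, preimage_smul₀ hl, _root_.smul_ball (inv_ne_zero hl),
      smul_zero, norm_inv, Real.norm_of_nonneg (div_pos hr hR).le, inv_div,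
      div_mul_cancel₀ R hr.ne']
  calc (unif (ball (0 : ℝⁿ) R)).map ((r / R) • ·) = (volume[|e ⁻¹' ball 0 r]).map e := by
        rw [hpre]; rfl
    _ = (volume.map e)[|ball 0 r] := map_cond_preimage e _ _
    _ = unif (ball (0 : ℝⁿ) r) := by
        rw [MeasurableEquiv.coe_smul₀, Measure.map_addHaar_smul volume hl]
        exact cond_smul_measure _ (ENNReal.ofReal_pos.2 (by positivity)).ne'
          ENNReal.ofReal_ne_top _

lemma le_of_volume_ball_le_volume_ball (hn : n ≠ 0) {r R : ℝ} (hR : 0 < R)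
    (h : volume (ball (0 : ℝⁿ) r) ≤ volume (ball (0 : ℝⁿ) R)) : r ≤ R := by
  by_contra! hRr
  rw [Measure.addHaar_ball_of_pos _ _ (hR.trans hRr), Measure.addHaar_ball_of_pos _ _ hR,
    finrank_euclideanSpace_fin, ENNReal.mul_le_mul_iff_left (measure_ball_pos _ _ one_pos).ne'
    measure_ball_lt_top.ne, ENNReal.ofReal_le_ofReal_iff (by positivity)] at h
  exact (pow_lt_pow_left₀ hRr hR.le hn).not_ge h

lemma secondMoment_unif_ball_ne_top {R : ℝ} (hR : 0 < R) :
    secondMoment (unif (ball (0 : ℝⁿ) R)) ≠ ∞ := by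
  have := isProbabilityMeasure_unif_ball (n := n) hR
  refine ne_top_of_le_ne_top (b := ENNReal.ofReal R ^ 2) (by simp) ?_
  have hae : ∀ᵐ a ∂unif (ball (0 : ℝⁿ) R), a ∈ ball 0 R :=
    mem_ae_iff.2 (unif_compl_eq_zero measurableSet_ball)
  calc secondMoment (unif (ball (0 : ℝⁿ) R)) ≤ ∫⁻ _, ENNReal.ofReal R ^ 2 ∂unif (ball 0 R) :=
        lintegral_mono_ae <| hae.mono fun a ha =>
          ((enorm_sq_lt_ofReal_sq_iff a R).2 (mem_ball_zero_iff.1 ha)).le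
    _ = ENNReal.ofReal R ^ 2 := by simp

variable [IsProbabilityMeasure μ] {R : ℝ}

theorem secondMoment_unif_ball_le (hR : 0 < R)
    (hμ : ∀ A, MeasurableSet A → μ A ≤ volume A / volume (ball (0 : ℝⁿ) R)) :
    secondMoment (unif (ball (0 : ℝⁿ) R)) ≤ secondMoment μ := by
  have := isProbabilityMeasure_unif_ball (n := n) hR
  exact lintegral_le_lintegral_of_restrict_le measurableSet_ball
    (unif_compl_eq_zero measurableSet_ball) (restrict_le_unif measurableSet_ball hμ)
    (by fun_prop) (c := ENNReal.ofReal R ^ 2)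
    (fun a ha => ((enorm_sq_lt_ofReal_sq_iff a R).2 (mem_ball_zero_iff.1 ha)).le)
    (fun a ha => not_lt.1 fun h => ha (mem_ball_zero_iff.2 ((enorm_sq_lt_ofReal_sq_iff a R).1 h)))

theorem eq_unif_ball_of_secondMoment_le (hR : 0 < R)
    (hμ : ∀ A, MeasurableSet A → μ A ≤ volume A / volume (ball (0 : ℝⁿ) R))
    (h : secondMoment μ ≤ secondMoment (unif (ball (0 : ℝⁿ) R))) :
    μ = unif (ball (0 : ℝⁿ) R) := by
  have := isProbabilityMeasure_unif_ball (n := n) hR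
  exact eq_of_lintegral_le_of_restrict_le measurableSet_ball
    (unif_compl_eq_zero measurableSet_ball) (restrict_le_unif measurableSet_ball hμ)
    (by fun_prop) (by simp)
    (fun a ha => (enorm_sq_lt_ofReal_sq_iff a R).2 (mem_ball_zero_iff.1 ha))
    (fun a ha => not_lt.1 fun h => ha (mem_ball_zero_iff.2 ((enorm_sq_lt_ofReal_sq_iff a R).1 h)))
    h

end Ball

end Transport

/-- **Reduction to optimal partial transport.** Let `B_r = B(0, r) ⊆ ℝⁿ` and
`vol(B_r) ≤ 𝒱 < ∞`, and let `r^{#} > 0` satisfy `vol(B(0, r^{#})) = 𝒱`. Among all Borel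
probability measures `μ` on `ℝⁿ` dominated by the density `1/𝒱` (i.e.
`μ(A) ≤ vol(A)/𝒱` for every Borel set `A`), the uniform measure on the concentric ball
`B(0, r^{#})` minimizes `W₂(μ, P_{B_r})`, and it is the unique minimizer. -/
theorem reduction_to_optimal_partial_transport (n : ℕ) (hn : 1 ≤ n) (r : ℝ) (hr : 0 < r)
    (𝒱 : ℝ) (h𝒱 : (volume (ball (0 : EuclideanSpace ℝ (Fin n)) r)).toReal ≤ 𝒱)
    (rS : ℝ) (hrS : 0 < rS)
    (hrS𝒱 : volume (ball (0 : EuclideanSpace ℝ (Fin n)) rS) = ENNReal.ofReal 𝒱) :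
    (∀ μ : Measure (EuclideanSpace ℝ (Fin n)), IsProbabilityMeasure μ →
      (∀ A : Set (EuclideanSpace ℝ (Fin n)), MeasurableSet A →
        μ A ≤ volume A / ENNReal.ofReal 𝒱) →
      W2 (unif (ball (0 : EuclideanSpace ℝ (Fin n)) rS))
          (unif (ball (0 : EuclideanSpace ℝ (Fin n)) r)) ≤
        W2 μ (unif (ball (0 : EuclideanSpace ℝ (Fin n)) r))) ∧
    (∀ μ : Measure (EuclideanSpace ℝ (Fin n)), IsProbabilityMeasure μ →
      (∀ A : Set (EuclideanSpace ℝ (Fin n)), MeasurableSet A →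
        μ A ≤ volume A / ENNReal.ofReal 𝒱) →
      W2 μ (unif (ball (0 : EuclideanSpace ℝ (Fin n)) r)) =
        W2 (unif (ball (0 : EuclideanSpace ℝ (Fin n)) rS))
          (unif (ball (0 : EuclideanSpace ℝ (Fin n)) r)) →
      μ = unif (ball (0 : EuclideanSpace ℝ (Fin n)) rS)) := by
  have hvol : volume (ball (0 : EuclideanSpace ℝ (Fin n)) r) ≤
      volume (ball (0 : EuclideanSpace ℝ (Fin n)) rS) := by
    rw [hrS𝒱, ← ENNReal.ofReal_toReal measure_ball_lt_top.ne]
    exact ENNReal.ofReal_le_ofReal h𝒱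
  have hl₀ : 0 < r / rS := div_pos hr hrS
  have hl₁ : r / rS ≤ 1 :=
    (div_le_one hrS).2 (le_of_volume_ball_le_volume_ball (by omega) hrS hvol)
  rw [← map_smul_unif_ball hr hrS, ← hrS𝒱]
  refine ⟨fun μ _ hμ => ?_, fun μ _ hμ hW => ?_⟩
  · rw [W2_eq_transportCost_rpow, W2_eq_transportCost_rpow]
    exact ENNReal.rpow_le_rpow (transportCost_map_smul_le_transportCost hl₀ hl₁
      (secondMoment_unif_ball_ne_top hrS) (secondMoment_unif_ball_le hrS hμ)) (by norm_num)
  · rw [W2_eq_transportCost_rpow, W2_eq_transportCost_rpow] at hW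
    exact eq_unif_ball_of_secondMoment_le hrS hμ
      (secondMoment_le_of_transportCost_le hl₀ hl₁
        (ENNReal.rpow_left_injective (by norm_num) hW).le)

end
end
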